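/- arXiv:1109.1767 — 9 statements merged into one kernel-verified Lean document; each statement's English description precedes it below -/
import Mathlib

section
/- Let α, β ∈ ℂ² be linearly independent with respect to the standard symmetric bilinear form (so δ² := (α·α)(β·β) − (α·β)² ≠ 0). Then there is a unique ξ ∈ span{α,β} satisfying (1/2)α·α − ξ·α = 1 and (1/2)β·β − ξ·β = 1, and the central charge c = 2 − 12 ξ·ξ is given by the explicit formula c = 2 − 3[ (4 + (α·α)(β·β))(α−β)·(α−β) + 4(α−β)·((α·α)β − (β·β)α) ] / δ². -/
noncomputable def dot2 (x y : Fin 2 → ℂ) : ℂ := x 0 * y 0 + x 1 * y 1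

noncomputable def crank2 (α β : Fin 2 → ℂ) : ℂ :=
  2 - 3 * ((4 + dot2 α α * dot2 β β) * dot2 (α - β) (α - β)
      + 4 * dot2 (α - β) (dot2 α α • β - dot2 β β • α)) /
    (dot2 α α * dot2 β β - (dot2 α β) ^ 2)

/-!
For a symmetric bilinear form `B` and vectors `α, β` with non-degenerate Gram matrix, the
conditions `B ξ α = e₁`, `B ξ β = e₂` on `ξ = a • α + b • β` form the linear system
`G (a, b) = (e₁, e₂)` with Gram matrix `G`, so Cramer's rule gives the unique `ξ` in the span.
Then `B ξ ξ = a e₁ + b e₂ = (e₁, e₂) G⁻¹ (e₁, e₂)ᵀ`, and with `e₁ = α·α/2 - 1`, `e₂ = β·β/2 - 1`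
the central charge `2 - 12 ξ·ξ` expands to the stated formula.
-/

namespace LinearMap.BilinForm

variable {K V : Type*} [Field K] [AddCommGroup V] [Module K V]

def gramDet (B : LinearMap.BilinForm K V) (α β : V) : K :=
  B α α * B β β - B α β ^ 2

noncomputable def spanPairSolution (B : LinearMap.BilinForm K V) (α β : V) (e₁ e₂ : K) : V :=
  ((e₁ * B β β - e₂ * B α β) / gramDet B α β) • α +
    ((e₂ * B α α - e₁ * B α β) / gramDet B α β) • β

variable {B : LinearMap.BilinForm K V} {α β : V}

theorem spanPairSolution_mem_span (e₁ e₂ : K) :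
    spanPairSolution B α β e₁ e₂ ∈ Submodule.span K {α, β} :=
  Submodule.mem_span_pair.2 ⟨_, _, rfl⟩

theorem spanPairSolution_apply_left (hB : B.IsSymm) (hδ : gramDet B α β ≠ 0) (e₁ e₂ : K) :
    B (spanPairSolution B α β e₁ e₂) α = e₁ := by
  simp only [spanPairSolution, map_add, map_smul, LinearMap.add_apply, LinearMap.smul_apply,
    smul_eq_mul, hB.eq β α]
  rw [div_mul_eq_mul_div, div_mul_eq_mul_div, ← add_div, div_eq_iff hδ, gramDet]
  ring

theorem spanPairSolution_apply_right (hδ : gramDet B α β ≠ 0) (e₁ e₂ : K) :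
    B (spanPairSolution B α β e₁ e₂) β = e₂ := by
  simp only [spanPairSolution, map_add, map_smul, LinearMap.add_apply, LinearMap.smul_apply,
    smul_eq_mul]
  rw [div_mul_eq_mul_div, div_mul_eq_mul_div, ← add_div, div_eq_iff hδ, gramDet]
  ring

theorem spanPairSolution_spec (hB : B.IsSymm) (hδ : gramDet B α β ≠ 0) (e₁ e₂ : K) :
    spanPairSolution B α β e₁ e₂ ∈ Submodule.span K {α, β} ∧
      B (spanPairSolution B α β e₁ e₂) α = e₁ ∧ B (spanPairSolution B α β e₁ e₂) β = e₂ :=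
  ⟨spanPairSolution_mem_span e₁ e₂, spanPairSolution_apply_left hB hδ e₁ e₂,
    spanPairSolution_apply_right hδ e₁ e₂⟩

theorem eq_zero_of_mem_span_pair_of_apply_eq_zero (hB : B.IsSymm) (hδ : gramDet B α β ≠ 0)
    {η : V} (hη : η ∈ Submodule.span K {α, β}) (hα : B η α = 0) (hβ : B η β = 0) : η = 0 := by
  obtain ⟨a, b, rfl⟩ := Submodule.mem_span_pair.1 hη
  simp only [map_add, map_smul, LinearMap.add_apply, LinearMap.smul_apply, smul_eq_mul,
    hB.eq β α] at hα hβ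
  have ha : a * gramDet B α β = 0 := by
    rw [gramDet]; linear_combination B β β * hα - B α β * hβ
  have hb : b * gramDet B α β = 0 := by
    rw [gramDet]; linear_combination B α α * hβ - B α β * hα
  simp [(mul_eq_zero.1 ha).resolve_right hδ, (mul_eq_zero.1 hb).resolve_right hδ]

theorem existsUnique_mem_span_pair_apply_eq (hB : B.IsSymm) (hδ : gramDet B α β ≠ 0)
    (e₁ e₂ : K) :
    ∃! ξ, ξ ∈ Submodule.span K {α, β} ∧ B ξ α = e₁ ∧ B ξ β = e₂ := by
  refine ⟨spanPairSolution B α β e₁ e₂, spanPairSolution_spec hB hδ e₁ e₂, ?_⟩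
  rintro ξ ⟨hξ, hα, hβ⟩
  rw [← sub_eq_zero]
  refine eq_zero_of_mem_span_pair_of_apply_eq_zero hB hδ
    (sub_mem hξ (spanPairSolution_mem_span e₁ e₂)) ?_ ?_
  · rw [map_sub, LinearMap.sub_apply, hα, spanPairSolution_apply_left hB hδ, sub_self]
  · rw [map_sub, LinearMap.sub_apply, hβ, spanPairSolution_apply_right hδ, sub_self]

theorem apply_self_eq_of_mem_span_pair (hB : B.IsSymm) (hδ : gramDet B α β ≠ 0) {ξ : V}
    {e₁ e₂ : K} (hξ : ξ ∈ Submodule.span K {α, β}) (hα : B ξ α = e₁) (hβ : B ξ β = e₂) :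
    B ξ ξ = (e₁ ^ 2 * B β β - 2 * e₁ * e₂ * B α β + e₂ ^ 2 * B α α) / gramDet B α β := by
  obtain rfl : ξ = spanPairSolution B α β e₁ e₂ :=
    (existsUnique_mem_span_pair_apply_eq hB hδ e₁ e₂).unique ⟨hξ, hα, hβ⟩
      (spanPairSolution_spec hB hδ e₁ e₂)
  nth_rewrite 2 [spanPairSolution]
  rw [map_add, map_smul, map_smul, smul_eq_mul, smul_eq_mul,
    spanPairSolution_apply_left hB hδ, spanPairSolution_apply_right hδ, gramDet]
  ring

end LinearMap.BilinForm

open LinearMap.BilinForm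

theorem dot2_eq_dotProductBilin (x y : Fin 2 → ℂ) : dot2 x y = dotProductBilin ℂ ℂ x y := by
  simp [dot2, dotProduct, Fin.sum_univ_two]

theorem isSymm_dotProductBilin {m R : Type*} [Fintype m] [CommSemiring R] :
    LinearMap.BilinForm.IsSymm (dotProductBilin R R : LinearMap.BilinForm R (m → R)) :=
  ⟨fun x y => by simp [dotProduct_comm]⟩

theorem crank2_eq (α β : Fin 2 → ℂ) :
    crank2 α β = 2 - 12 * (((dot2 α α / 2 - 1) ^ 2 * dot2 β β
      - 2 * (dot2 α α / 2 - 1) * (dot2 β β / 2 - 1) * dot2 α β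
      + (dot2 β β / 2 - 1) ^ 2 * dot2 α α) / (dot2 α α * dot2 β β - dot2 α β ^ 2)) := by
  simp only [crank2, dot2, Pi.sub_apply, Pi.smul_apply, smul_eq_mul]
  ring

theorem rank2_central_charge (α β : Fin 2 → ℂ)
    (hδ : dot2 α α * dot2 β β - (dot2 α β) ^ 2 ≠ 0) :
    (∃! ξ : Fin 2 → ℂ, ξ ∈ Submodule.span ℂ ({α, β} : Set (Fin 2 → ℂ)) ∧
        (1/2 : ℂ) * dot2 α α - dot2 ξ α = 1 ∧
        (1/2 : ℂ) * dot2 β β - dot2 ξ β = 1) ∧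
    ∀ ξ : Fin 2 → ℂ, ξ ∈ Submodule.span ℂ ({α, β} : Set (Fin 2 → ℂ)) →
      (1/2 : ℂ) * dot2 α α - dot2 ξ α = 1 →
      (1/2 : ℂ) * dot2 β β - dot2 ξ β = 1 →
      2 - 12 * dot2 ξ ξ = crank2 α β := by
  have hcond (x y : ℂ) : (1/2 : ℂ) * x - y = 1 ↔ y = x / 2 - 1 := by
    constructor <;> intro h <;> linear_combination -h
  rw [crank2_eq]
  simp only [hcond, dot2_eq_dotProductBilin] at hδ ⊢
  refine ⟨existsUnique_mem_span_pair_apply_eq isSymm_dotProductBilin hδ _ _,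
    fun ξ hξ hα hβ => ?_⟩
  rw [apply_self_eq_of_mem_span_pair isSymm_dotProductBilin hδ hξ hα hβ, gramDet]
end

section
/- Let α_1,…,α_θ ∈ ℂ^θ be linearly independent for the standard symmetric bilinear form, let (a_{i,j}) be a matrix of complex numbers with a_{i,i} = 2, and fix k. Assume for every i ≠ k that either 2 α_i·α_k = a_{k,i} (α_k·α_k) or (1 − a_{k,i})(α_k·α_k) = 2, and assume α_k·α_k ≠ 0. Let (x_j) solve (1/2) α_i·α_i − Σ_j x_j α_j·α_i = 1 for all i, and set y = 1 − 2/(α_k·α_k) − Σ_j x_j a_{k,j}. Then x̃_j := x_j + δ_{j,k} y solves the reflected system (1/2) g̃_{ii} − Σ_j x̃_j g̃_{ji} = 1 for all i, where g̃_{ij} := α_i·α_j − a_{k,j} α_i·α_k − a_{k,i} α_k·α_j + a_{k,i}a_{k,j} α_k·α_k. -/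
noncomputable def dotn {θ : ℕ} (x y : Fin θ → ℂ) : ℂ := ∑ i, x i * y i

/-!
The reflected Gram matrix is the Gram matrix of the reflected momenta `σₖ(αᵢ) = αᵢ - aₖᵢ αₖ`,
and since `aₖₖ = 2` the shift of `xₖ` by `y` gives
`∑ⱼ x̃ⱼ σₖ(αⱼ) = ∑ⱼ xⱼ αⱼ - (1 - 2 / (αₖ·αₖ)) αₖ`. Pairing this with `σₖ(αᵢ)` and using the
unreflected conditions for `i` and `k`, the `i`-th reflected condition becomes
`(2 αᵢ·αₖ - aₖᵢ αₖ·αₖ) ((1 - aₖᵢ) αₖ·αₖ - 2) = 0`, whose first factor vanishes for `i = k`.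
-/

open Matrix

namespace ReflectedSystem

section CommRing

variable {R ι n : Type*} [CommRing R]

def reflect (a : ι → ι → R) (α : ι → n → R) (k i : ι) : n → R := α i - a k i • α k

theorem sum_smul_reflect [Fintype ι] [DecidableEq ι] {a : ι → ι → R} (α : ι → n → R) {k : ι}
    (hk : a k k = 2) (x : ι → R) (y : R) :
    ∑ j, (x j + if j = k then y else 0) • reflect a α k j
      = ∑ j, x j • α j - (∑ j, x j * a k j + y) • α k := by
  simp only [add_smul, ite_smul, zero_smul, Finset.sum_add_distrib, Finset.sum_ite_eq',
    Finset.mem_univ, if_true]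
  simp only [reflect, hk, smul_sub, Finset.sum_sub_distrib, smul_smul, ← Finset.sum_smul]
  module

variable [Fintype n]

theorem reflect_dotProduct_reflect (a : ι → ι → R) (α : ι → n → R) (k i j : ι) :
    reflect a α k i ⬝ᵥ reflect a α k j = α i ⬝ᵥ α j - a k j * (α i ⬝ᵥ α k)
      - a k i * (α k ⬝ᵥ α j) + a k i * a k j * (α k ⬝ᵥ α k) := by
  simp only [reflect, sub_dotProduct, dotProduct_sub, smul_dotProduct, dotProduct_smul,
    smul_eq_mul]
  ring

theorem sum_mul_dotProduct [Fintype ι] (x : ι → R) (v : ι → n → R) (w : n → R) :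
    ∑ j, x j * (v j ⬝ᵥ w) = (∑ j, x j • v j) ⬝ᵥ w := by
  simp only [sum_dotProduct, smul_dotProduct, smul_eq_mul]

end CommRing

variable {K ι n : Type*} [Field K] [Fintype ι] [Fintype n]

def SolvesDimensionOneConditions (v : ι → n → K) (x : ι → K) : Prop :=
  ∀ i, (1 / 2 : K) * (v i ⬝ᵥ v i) - ∑ j, x j * (v j ⬝ᵥ v i) = 1

theorem solvesDimensionOneConditions_reflect [NeZero (2 : K)] [DecidableEq ι]
    {a : ι → ι → K} {α : ι → n → K} {k : ι} (hk : a k k = 2)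
    (hcart : ∀ i, i ≠ k → 2 * (α i ⬝ᵥ α k) = a k i * (α k ⬝ᵥ α k) ∨
      (1 - a k i) * (α k ⬝ᵥ α k) = 2)
    (hk0 : α k ⬝ᵥ α k ≠ 0) {x : ι → K} (hx : SolvesDimensionOneConditions α x) :
    SolvesDimensionOneConditions (reflect a α k)
      (fun j ↦ x j + if j = k then 1 - 2 / (α k ⬝ᵥ α k) - ∑ j, x j * a k j else 0) := by
  intro i
  have hX : ∀ j, (∑ j, x j • α j) ⬝ᵥ α j = 1 / 2 * (α j ⬝ᵥ α j) - 1 := fun j ↦ by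
    rw [← sum_mul_dotProduct]
    linear_combination -hx j
  have hcart_i : (2 * (α i ⬝ᵥ α k) - a k i * (α k ⬝ᵥ α k)) *
      ((1 - a k i) * (α k ⬝ᵥ α k) - 2) = 0 := by
    obtain rfl | hik := eq_or_ne i k
    · rw [hk]; ring
    · rcases hcart i hik with h | h <;> simp [h]
  rw [sum_mul_dotProduct, sum_smul_reflect α hk, reflect_dotProduct_reflect]
  simp only [reflect, sub_dotProduct, dotProduct_sub, smul_dotProduct, dotProduct_smul,
    smul_eq_mul, hX, dotProduct_comm (α k) (α i)]
  field_simp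
  linear_combination hcart_i

end ReflectedSystem

open ReflectedSystem in
theorem reflected_system_solution_general {θ : ℕ} (α : Fin θ → Fin θ → ℂ)
    (a : Fin θ → Fin θ → ℂ) (k : Fin θ) (ha : ∀ i, a i i = 2)
    (hcart : ∀ i, i ≠ k →
      2 * dotn (α i) (α k) = a k i * dotn (α k) (α k) ∨
      (1 - a k i) * dotn (α k) (α k) = 2)
    (hk0 : dotn (α k) (α k) ≠ 0)
    (x : Fin θ → ℂ)
    (hx : ∀ i, (1/2 : ℂ) * dotn (α i) (α i) - ∑ j, x j * dotn (α j) (α i) = 1)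
    (y : ℂ) (hy : y = 1 - 2 / dotn (α k) (α k) - ∑ j, x j * a k j)
    (g : Fin θ → Fin θ → ℂ)
    (hg : ∀ i j, g i j = dotn (α i) (α j) - a k j * dotn (α i) (α k)
      - a k i * dotn (α k) (α j) + a k i * a k j * dotn (α k) (α k)) :
    ∀ i, (1/2 : ℂ) * g i i - ∑ j, (x j + if j = k then y else 0) * g j i = 1 := by
  have hg_reflect : g = fun i j ↦ reflect a α k i ⬝ᵥ reflect a α k j := by
    funext i j
    exact (hg i j).trans (reflect_dotProduct_reflect a α k i j).symm
  subst hy hg_reflect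
  exact solvesDimensionOneConditions_reflect (ha k) hcart hk0 hx

theorem reflected_system_solution {θ : ℕ} (α : Fin θ → Fin θ → ℂ)
    (a : Fin θ → Fin θ → ℂ) (k : Fin θ) (ha : ∀ i, a i i = 2)
    (hlin : LinearIndependent ℂ α)
    (hcart : ∀ i, i ≠ k →
      2 * dotn (α i) (α k) = a k i * dotn (α k) (α k) ∨
      (1 - a k i) * dotn (α k) (α k) = 2)
    (hk0 : dotn (α k) (α k) ≠ 0)
    (x : Fin θ → ℂ)
    (hx : ∀ i, (1/2 : ℂ) * dotn (α i) (α i) - ∑ j, x j * dotn (α j) (α i) = 1)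
    (y : ℂ) (hy : y = 1 - 2 / dotn (α k) (α k) - ∑ j, x j * a k j)
    (g : Fin θ → Fin θ → ℂ)
    (hg : ∀ i j, g i j = dotn (α i) (α j) - a k j * dotn (α i) (α k)
      - a k i * dotn (α k) (α j) + a k i * a k j * dotn (α k) (α k)) :
    ∀ i, (1/2 : ℂ) * g i i - ∑ j, (x j + if j = k then y else 0) * g j i = 1 :=
  reflected_system_solution_general α a k ha hcart hk0 x hx y hy g hg
end

section
/- Under the hypotheses of the previous lemma (linear independence, Cartan-type conditions 2 α_i·α_k = a_{k,i} α_k·α_k or (1 − a_{k,i}) α_k·α_k = 2 for i ≠ k, and α_k·α_k ≠ 0), the central charge is invariant under the Weyl reflection: Σ_{ℓ,j} x̃_ℓ x̃_j g̃_{ℓj} = Σ_{ℓ,j} x_ℓ x_j (α_ℓ·α_j), and hence 𝔯^{(k)}(c) = c where c = θ − 12 Σ_{ℓ,j} x_ℓ x_j α_ℓ·α_j. -/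
theorem central_charge_weyl_invariant {θ : ℕ} (α : Fin θ → Fin θ → ℂ)
    (a : Fin θ → Fin θ → ℂ) (k : Fin θ) (ha : ∀ i, a i i = 2)
    (hlin : LinearIndependent ℂ α)
    (hcart : ∀ i, i ≠ k →
      2 * dotn (α i) (α k) = a k i * dotn (α k) (α k) ∨
      (1 - a k i) * dotn (α k) (α k) = 2)
    (hk0 : dotn (α k) (α k) ≠ 0)
    (x : Fin θ → ℂ)
    (hx : ∀ i, (1/2 : ℂ) * dotn (α i) (α i) - ∑ j, x j * dotn (α j) (α i) = 1)
    (y : ℂ) (hy : y = 1 - 2 / dotn (α k) (α k) - ∑ j, x j * a k j)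
    (g : Fin θ → Fin θ → ℂ)
    (hg : ∀ i j, g i j = dotn (α i) (α j) - a k j * dotn (α i) (α k)
      - a k i * dotn (α k) (α j) + a k i * a k j * dotn (α k) (α k)) :
    (∑ l, ∑ j, (x l + if l = k then y else 0) * (x j + if j = k then y else 0) * g l j
      = ∑ l, ∑ j, x l * x j * dotn (α l) (α j)) ∧
    (θ : ℂ) - 12 * ∑ l, ∑ j,
        (x l + if l = k then y else 0) * (x j + if j = k then y else 0) * g l j
      = (θ : ℂ) - 12 * ∑ l, ∑ j, x l * x j * dotn (α l) (α j) := by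
  have hdsymm : ∀ i j : Fin θ, dotn (α i) (α j) = dotn (α j) (α i) := by
    intro i j; simp [dotn, mul_comm]
  set u : Fin θ → ℂ := fun j => x j + if j = k then y else 0 with hu
  set A : ℂ := dotn (α k) (α k) with hAd
  -- single sum evaluation
  have hS : ∀ f : Fin θ → ℂ, ∑ j, u j * f j = (∑ j, x j * f j) + y * f k := by
    intro f
    simp [hu, add_mul, Finset.sum_add_distrib, ite_mul]
  -- expansion of g-sum
  have expand : ∑ l, ∑ j, u l * u j * g l j
      = (∑ l, ∑ j, u l * u j * dotn (α l) (α j))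
        - (∑ l, u l * dotn (α l) (α k)) * (∑ j, u j * a k j)
        - (∑ l, u l * a k l) * (∑ j, u j * dotn (α k) (α j))
        + (∑ l, u l * a k l) * (∑ j, u j * (a k j * A)) := by
    have inner : ∀ l, ∑ j, u l * u j * g l j
        = (∑ j, u l * u j * dotn (α l) (α j))
          - (u l * dotn (α l) (α k)) * (∑ j, u j * a k j)
          - (u l * a k l) * (∑ j, u j * dotn (α k) (α j))
          + (u l * a k l) * (∑ j, u j * (a k j * A)) := by
      intro l
      rw [Finset.mul_sum, Finset.mul_sum, Finset.mul_sum,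
        ← Finset.sum_sub_distrib, ← Finset.sum_sub_distrib, ← Finset.sum_add_distrib]
      exact Finset.sum_congr rfl fun j _ => by rw [hg]; ring
    simp only [inner]
    rw [Finset.sum_add_distrib, Finset.sum_sub_distrib, Finset.sum_sub_distrib,
      ← Finset.sum_mul, ← Finset.sum_mul, ← Finset.sum_mul]
  -- double sum evaluation
  have hDD : ∑ l, ∑ j, u l * u j * dotn (α l) (α j)
      = (∑ l, ∑ j, x l * x j * dotn (α l) (α j))
        + y * (∑ j, x j * dotn (α k) (α j))
        + y * (∑ l, x l * dotn (α l) (α k)) + y * y * A := by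
    have h1 : ∀ l, ∑ j, u l * u j * dotn (α l) (α j)
        = u l * ((∑ j, x j * dotn (α l) (α j)) + y * dotn (α l) (α k)) := by
      intro l
      rw [← hS fun j => dotn (α l) (α j), Finset.mul_sum]
      exact Finset.sum_congr rfl fun j _ => by ring
    simp only [h1]
    rw [hS]
    have h2 : ∀ l, x l * ((∑ j, x j * dotn (α l) (α j)) + y * dotn (α l) (α k))
        = (∑ j, x l * x j * dotn (α l) (α j)) + (x l * dotn (α l) (α k)) * y := by
      intro l
      rw [mul_add, Finset.mul_sum]
      congr 1
      · exact Finset.sum_congr rfl fun j _ => by ring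
      · ring
    simp only [h2]
    rw [Finset.sum_add_distrib, ← Finset.sum_mul]
    ring
  -- key scalar facts
  have hVk : ∑ j, x j * dotn (α j) (α k) = A / 2 - 1 := by
    have h := hx k
    rw [← hAd] at h
    linear_combination -h
  have hVk' : ∑ j, x j * dotn (α k) (α j) = A / 2 - 1 := by
    rw [← hVk]
    exact Finset.sum_congr rfl fun j _ => by rw [hdsymm k j]
  have hak : ∑ j, u j * a k j = (∑ j, x j * a k j) + 2 * y := by
    rw [hS, ha k]; ring
  have hakA : ∑ j, u j * (a k j * A) = ((∑ j, x j * a k j) + 2 * y) * A := by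
    rw [hS (fun j => a k j * A), ha k, add_mul, Finset.sum_mul]
    congr 1
    · exact Finset.sum_congr rfl fun j _ => by ring
    · ring
  have huDk : ∑ l, u l * dotn (α l) (α k) = (A / 2 - 1) + y * A := by
    rw [hS, hVk, ← hAd]
  have huDk' : ∑ j, u j * dotn (α k) (α j) = (A / 2 - 1) + y * A := by
    rw [hS, hVk', ← hAd]
  have hua : ∑ l, u l * a k l = (∑ j, x j * a k j) + 2 * y := hak
  have key : ∑ l, ∑ j, u l * u j * g l j = ∑ l, ∑ j, x l * x j * dotn (α l) (α j) := by
    rw [expand, hDD, hak, hakA, huDk, huDk', hVk, hVk']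
    have hy2 : y * A = A - 2 - (∑ j, x j * a k j) * A := by
      rw [hy]
      field_simp
    linear_combination (y + ∑ j, x j * a k j) * hy2
  exact ⟨key, by rw [key]⟩
end

section
/- Let p be a rational number with p ≠ 0, j an integer, and α, β ∈ ℂ² linearly independent with α·α = β·β = 1 and 2 α·β = 2/p + 2j. Then the rank-2 central charge equals 3k/(k+2) − 1 where k + 1 = 1/p + j (assuming k + 2 ≠ 0). -/
theorem sl2_coset_central_charge_case31 (p : ℚ) (hp : p ≠ 0) (j : ℤ)
    (α β : Fin 2 → ℂ) (hlin : LinearIndependent ℂ ![α, β])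
    (haa : dot2 α α = 1) (hbb : dot2 β β = 1)
    (hab : 2 * dot2 α β = 2 / (p : ℂ) + 2 * (j : ℂ))
    (k : ℚ) (hk : k + 1 = 1 / p + j) (hk2 : k + 2 ≠ 0) :
    crank2 α β = 3 * (k : ℂ) / ((k : ℂ) + 2) - 1 := by
  have hpc : (p : ℂ) ≠ 0 := by exact_mod_cast hp
  have hk2c : (k : ℂ) + 2 ≠ 0 := by
    intro h
    apply hk2
    have : ((k + 2 : ℚ) : ℂ) = 0 := by push_cast; exact h
    exact_mod_cast this
  have h2 : (k : ℂ) + 1 = 1 / (p : ℂ) + (j : ℂ) := by exact_mod_cast hk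
  have htk : dot2 α β = (k : ℂ) + 1 := by
    linear_combination hab / 2 - h2
  -- nonvanishing determinant from linear independence
  have hpair := LinearIndependent.pair_iff.mp hlin
  have hdet : α 0 * β 1 - α 1 * β 0 ≠ 0 := by
    intro h
    rcases eq_or_ne (α 0) 0 with h0 | h0
    · have h1 : α 1 ≠ 0 := by
        intro h1
        simp [dot2, h0, h1] at haa
      have heq : (β 1) • α + (-(α 1)) • β = 0 := by
        funext i
        fin_cases i <;>
          simp only [Pi.add_apply, Pi.smul_apply, smul_eq_mul, Pi.zero_apply, Fin.mk_zero,
            Fin.mk_one, Fin.isValue, neg_mul]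
        · linear_combination h
        · ring
      exact h1 (neg_eq_zero.mp (hpair _ _ heq).2)
    · have heq : (β 0) • α + (-(α 0)) • β = 0 := by
        funext i
        fin_cases i <;>
          simp only [Pi.add_apply, Pi.smul_apply, smul_eq_mul, Pi.zero_apply, Fin.mk_zero,
            Fin.mk_one, Fin.isValue, neg_mul]
        · ring
        · linear_combination -h
      exact h0 (neg_eq_zero.mp (hpair _ _ heq).2)
  have hden : dot2 α α * dot2 β β - (dot2 α β) ^ 2 ≠ 0 := by
    have key : dot2 α α * dot2 β β - (dot2 α β) ^ 2
        = (α 0 * β 1 - α 1 * β 0) ^ 2 := by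
      simp only [dot2]; ring
    rw [key]
    exact pow_ne_zero _ hdet
  have e1 : dot2 (α - β) (α - β) = 2 - 2 * dot2 α β := by
    simp only [dot2, Pi.sub_apply] at *
    linear_combination haa + hbb
  have e2 : dot2 (α - β) (dot2 α α • β - dot2 β β • α) = 2 * dot2 α β - 2 := by
    simp only [dot2, Pi.sub_apply, Pi.smul_apply, smul_eq_mul] at *
    linear_combination (α 0 * β 0 + α 1 * β 1 - 2 * (β 0 * β 0 + β 1 * β 1)) * haa
      + (α 0 * β 0 + α 1 * β 1 - 2) * hbb
  have hden' : dot2 α α * dot2 β β - (dot2 α β) ^ 2 ≠ 0 := hden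
  have hk0 : (k : ℂ) ≠ 0 := by
    intro h
    apply hden
    rw [haa, hbb, htk, h]
    ring
  unfold crank2
  rw [e1, e2, haa, hbb, htk]
  have hden2 : (1 : ℂ) * 1 - ((k : ℂ) + 1) ^ 2 = -((k : ℂ) * ((k : ℂ) + 2)) := by ring
  rw [hden2]
  field_simp
  ring
end

section
/- Suppose rational numbers satisfy: α·α = 1 + 2n and β·β = 1 + 2m for integers n, m; 2 α·β = 2/p + 2j for integers p, j with |p| ≥ 3; and for each of the two pairs (i,j) with A₂ Cartan matrix entries a_{12} = a_{21} = −1, the condition '2 α_i·α_j = a_{i,j} α_i·α_i or (1 − a_{i,j}) α_i·α_i = 2' holds. Then m = n = 0. -/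
theorem case31_forces_fermionic (aa ab bb : ℚ) (n m j p : ℤ) (hp : 3 ≤ |p|)
    (haa : aa = 1 + 2 * n) (hbb : bb = 1 + 2 * m)
    (hab : 2 * ab = 2 / (p : ℚ) + 2 * j)
    (h1 : 2 * ab = (-1) * aa ∨ (1 - (-1 : ℚ)) * aa = 2)
    (h2 : 2 * ab = (-1) * bb ∨ (1 - (-1 : ℚ)) * bb = 2) :
    m = 0 ∧ n = 0 := by
  have hpne : p ≠ 0 := by rintro rfl; simp at hp
  have hpq : (p : ℚ) ≠ 0 := Int.cast_ne_zero.mpr hpne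
  have key : ∀ c : ℤ, 2 * ab ≠ (c : ℚ) := by
    intro c hc
    have h2p : (2 : ℚ) / p = (c : ℚ) - 2 * j := by rw [hc] at hab; linarith
    have hq : (2 : ℚ) = (p : ℚ) * ((c : ℚ) - 2 * j) := by
      field_simp at h2p; linarith
    have hz : (2 : ℤ) = p * (c - 2 * j) := by exact_mod_cast hq
    have hdvd : |p| ∣ 2 := (abs_dvd _ _).mpr ⟨c - 2 * j, hz⟩
    have := Int.le_of_dvd (by norm_num) hdvd
    linarith
  rcases h1 with h | h
  · exfalso
    apply key (-(1 + 2 * n))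
    rw [h, haa]; push_cast; ring
  · have hn : n = 0 := by
      rw [haa] at h
      have : (n : ℚ) = 0 := by linarith
      exact_mod_cast this
    rcases h2 with h' | h'
    · exfalso
      apply key (-(1 + 2 * m))
      rw [h', hbb]; push_cast; ring
    · have hm : m = 0 := by
        rw [hbb] at h'
        have : (m : ℚ) = 0 := by linarith
        exact_mod_cast this
      exact ⟨hm, hn⟩
end

section
/- Suppose rational numbers satisfy: α·α = 1 + 2n for an integer n, 2 α·β = −2/p + 2j for integers p, j with |p| ≥ 3, and 2 α·β + β·β = 2m for an integer m; and assume the A₂ Cartan-type conditions hold for both pairs: (2 α·β = −(α·α) or (1−(−1)) α·α = 2, i.e. α·α = 1) and (2 α·β = −(β·β) or β·β = 1). Then m = n = 0. -/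
lemma two_div_ne_int (p k : ℤ) (hp : 3 ≤ |p|) : (2 : ℚ) / (p : ℚ) ≠ (k : ℚ) := by
  have hp0 : p ≠ 0 := by
    intro h; rw [h] at hp; norm_num at hp
  have hpq : (p : ℚ) ≠ 0 := Int.cast_ne_zero.mpr hp0
  intro h
  have habs : |(2 : ℚ) / (p : ℚ)| = 2 / |(p : ℚ)| := by
    rw [abs_div]; norm_num
  have h3 : (3 : ℚ) ≤ |(p : ℚ)| := by
    rw [← Int.cast_abs]; exact_mod_cast hp
  have hlt : |(2 : ℚ) / (p : ℚ)| < 1 := by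
    rw [habs]
    rw [div_lt_one (by linarith)]
    linarith
  have hne : (2 : ℚ) / (p : ℚ) ≠ 0 := div_ne_zero (by norm_num) hpq
  rw [h] at hlt hne
  have : |k| < 1 := by exact_mod_cast hlt
  have : k = 0 := by rw [abs_lt] at this; omega
  exact hne (by simp [this])

theorem case22_forces_fermionic (aa ab bb : ℚ) (n p j m : ℤ) (hp : 3 ≤ |p|)
    (haa : aa = 1 + 2 * n) (hab : 2 * ab = -2 / (p : ℚ) + 2 * j)
    (hm : 2 * ab + bb = 2 * m)
    (h1 : 2 * ab = -aa ∨ aa = 1)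
    (h2 : 2 * ab = -bb ∨ bb = 1) :
    m = 0 ∧ n = 0 := by
  have hn : n = 0 := by
    rcases h1 with h | h
    · exfalso
      apply two_div_ne_int p (1 + 2 * n + 2 * j) hp
      push_cast
      rw [haa] at h
      have : -2 / (p : ℚ) = -(1 + 2 * n) - 2 * j := by linarith [hab, h]
      rw [neg_div] at this
      linarith
    · rw [haa] at h
      have : (n : ℚ) = 0 := by linarith
      exact_mod_cast this
  refine ⟨?_, hn⟩
  rcases h2 with h | h
  · have : (2 : ℚ) * m = 0 := by linarith
    have : (m : ℚ) = 0 := by linarith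
    exact_mod_cast this
  · exfalso
    apply two_div_ne_int p (2 * j + 1 - 2 * m) hp
    push_cast
    have : -2 / (p : ℚ) = 2 * m - 1 - 2 * j := by linarith [hab, hm, h]
    rw [neg_div] at this
    linarith
end

section
/- Let p be a rational number with p ∉ {0, 3/4}, j an integer, and α, β ∈ ℂ² linearly independent with α·α = 2/3, 2 α·β = −2/p + 2j, and 2 α·β + β·β = 0. Then the rank-2 central charge equals −21/2 − 6z − 27/(2(4z − 3)), where 1/z = 1/p − j (assuming 1/p − j ≠ 0 and 4z ≠ 3). -/
noncomputable def gramCentralCharge (a t b : ℂ) : ℂ :=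
  2 - 3 * ((4 + a * b) * (a - 2 * t + b) + 4 * (a * t + b * t - 2 * a * b)) / (a * b - t ^ 2)

theorem crank2_eq_gramCentralCharge (α β : Fin 2 → ℂ) :
    crank2 α β = gramCentralCharge (dot2 α α) (dot2 α β) (dot2 β β) := by
  simp only [crank2, gramCentralCharge, dot2, Pi.sub_apply, Pi.smul_apply, smul_eq_mul]
  ring_nf

theorem gramCentralCharge_case23 {z : ℂ} (hz : z ≠ 0) (h43 : 4 * z - 3 ≠ 0) :
    gramCentralCharge (2 / 3) (-(1 / z)) (2 / z) = -21/2 - 6 * z - 27 / (2 * (4 * z - 3)) := by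
  have hdet : 2 / 3 * (2 / z) - (-(1 / z)) ^ 2 = (4 * z - 3) / (3 * z ^ 2) := by
    field_simp
    ring
  rw [gramCentralCharge, hdet]
  field_simp
  ring

theorem case23_regular_central_charge_general (p : ℚ)
    (j : ℤ) (α β : Fin 2 → ℂ)
    (haa : dot2 α α = 2/3)
    (hab : 2 * dot2 α β = -2 / (p : ℂ) + 2 * (j : ℂ))
    (hm : 2 * dot2 α β + dot2 β β = 0)
    (z : ℚ) (hz : 1 / z = 1 / p - j) (hne : 1 / p - (j : ℚ) ≠ 0)
    (h43 : 4 * z ≠ 3) :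
    crank2 α β = -21/2 - 6 * (z : ℂ) - 27 / (2 * (4 * (z : ℂ) - 3)) := by
  have hz0 : (z : ℂ) ≠ 0 := by
    intro h
    exact hne (by rw [← hz, Rat.cast_eq_zero.mp h, div_zero])
  have h43C : 4 * (z : ℂ) - 3 ≠ 0 :=
    sub_ne_zero.mpr (by exact_mod_cast h43)
  have hzC : 1 / (z : ℂ) = 1 / (p : ℂ) - j := by exact_mod_cast hz
  have hab' : dot2 α β = -(1 / (z : ℂ)) := by linear_combination hab / 2 + hzC
  have hbb : dot2 β β = 2 / (z : ℂ) := by linear_combination hm - 2 * hab'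
  rw [crank2_eq_gramCentralCharge, haa, hab', hbb, gramCentralCharge_case23 hz0 h43C]

theorem case23_regular_central_charge (p : ℚ) (hp0 : p ≠ 0) (hp34 : p ≠ 3/4)
    (j : ℤ) (α β : Fin 2 → ℂ) (hlin : LinearIndependent ℂ ![α, β])
    (haa : dot2 α α = 2/3)
    (hab : 2 * dot2 α β = -2 / (p : ℂ) + 2 * (j : ℂ))
    (hm : 2 * dot2 α β + dot2 β β = 0)
    (z : ℚ) (hz : 1 / z = 1 / p - j) (hne : 1 / p - (j : ℚ) ≠ 0)
    (h43 : 4 * z ≠ 3) :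
    crank2 α β = -21/2 - 6 * (z : ℂ) - 27 / (2 * (4 * (z : ℂ) - 3)) :=
  case23_regular_central_charge_general p j α β haa hab hm z hz hne h43
end

section
/- Let p be a rational number, j an integer with 1/p + j ≠ 0, and α, β ∈ ℂ² linearly independent with α·α = 2/p + 2j, 2 α·β + 2 α·α = 0, and β·β = 2(α·α) (so that the Gram data corresponds to Cartan type B₂: q₂₂ = q₁₁², q₁₂q₂₁ = q₁₁⁻²). Then the rank-2 central charge equals 86 − 60t − 30/t, where t = 1/p + j. -/
lemma dot2_comm (x y : Fin 2 → ℂ) : dot2 x y = dot2 y x := by unfold dot2; ring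

lemma dot2_smul_add_left (c d : ℂ) (u v w : Fin 2 → ℂ) :
    dot2 (c • u + d • v) w = c * dot2 u w + d * dot2 v w := by
  simp [dot2]; ring

theorem WB2_central_charge (p : ℚ) (j : ℤ) (t : ℚ) (ht : t = 1 / p + j)
    (ht0 : t ≠ 0) (α β : Fin 2 → ℂ) (hlin : LinearIndependent ℂ ![α, β])
    (haa : dot2 α α = 2 / (p : ℂ) + 2 * (j : ℂ))
    (hab : 2 * dot2 α β + 2 * dot2 α α = 0)
    (hbb : dot2 β β = 2 * dot2 α α) :
    ∀ ξ : Fin 2 → ℂ, ξ ∈ Submodule.span ℂ ({α, β} : Set (Fin 2 → ℂ)) →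
      (1/2 : ℂ) * dot2 α α - dot2 ξ α = 1 →
      (1/2 : ℂ) * dot2 β β - dot2 ξ β = 1 →
      2 - 12 * dot2 ξ ξ = 86 - 60 * (t : ℂ) - 30 / (t : ℂ) := by
  intro ξ hξ h1 h2
  rw [Submodule.mem_span_pair] at hξ
  obtain ⟨x, y, hxy⟩ := hξ
  subst hxy
  have htC : (t : ℂ) ≠ 0 := by exact_mod_cast ht0
  have hA : dot2 α α = 2 * (t : ℂ) := by
    rw [haa, ht]; push_cast; ring
  have hB : dot2 α β = -(2 * (t : ℂ)) := by
    rw [hA] at hab; linear_combination hab / 2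
  have hC : dot2 β β = 4 * (t : ℂ) := by rw [hbb, hA]; ring
  rw [dot2_smul_add_left] at h1 h2 ⊢
  rw [show dot2 α (x • α + y • β) = x * dot2 α α + y * dot2 α β from by
        rw [dot2_comm, dot2_smul_add_left, dot2_comm α β],
      show dot2 β (x • α + y • β) = x * dot2 α β + y * dot2 β β from by
        rw [dot2_comm, dot2_smul_add_left]]
  rw [dot2_comm β α] at h1
  simp only [hA, hB, hC] at h1 h2 ⊢
  have hx : 2 * (t:ℂ) * x = 4 * t - 3 := by linear_combination -2 * h1 - h2
  have hy : 2 * (t:ℂ) * y = 3 * t - 2 := by linear_combination -h1 - h2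
  apply mul_right_cancel₀ htC
  rw [sub_mul, sub_mul, div_mul_cancel₀ _ htC]
  linear_combination (-6 * (2*(t:ℂ)*x - 2*t + 1)) * hx + (-6 * (-4*(t:ℂ)*x + 4*t*y + 6*t - 4)) * hy
end

section
/- Let p be a rational number, j an integer with 1/p + j ≠ 0, and α, β ∈ ℂ² linearly independent with α·α = 2/p + 2j, 2 α·β + 3 α·α = 0, and β·β = 3(α·α) (Cartan type G₂). Then the rank-2 central charge equals 194 − 168t − 56/t, where t = 1/p + j. -/
theorem WG2_central_charge (p : ℚ) (j : ℤ) (t : ℚ) (ht : t = 1 / p + j)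
    (ht0 : t ≠ 0) (α β : Fin 2 → ℂ) (hlin : LinearIndependent ℂ ![α, β])
    (haa : dot2 α α = 2 / (p : ℂ) + 2 * (j : ℂ))
    (hab : 2 * dot2 α β + 3 * dot2 α α = 0)
    (hbb : dot2 β β = 3 * dot2 α α) :
    ∀ ξ : Fin 2 → ℂ, ξ ∈ Submodule.span ℂ ({α, β} : Set (Fin 2 → ℂ)) →
      (1/2 : ℂ) * dot2 α α - dot2 ξ α = 1 →
      (1/2 : ℂ) * dot2 β β - dot2 ξ β = 1 →
      2 - 12 * dot2 ξ ξ = 194 - 168 * (t : ℂ) - 56 / (t : ℂ) := by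
  intro ξ hmem h1 h2
  obtain ⟨a, b, rfl⟩ := Submodule.mem_span_pair.mp hmem
  have htC : (t : ℂ) ≠ 0 := by exact_mod_cast ht0
  -- α·α = 2t
  have hA : dot2 α α = 2 * (t : ℂ) := by
    rw [haa, ht]; push_cast; ring
  have hQ : dot2 α β = -3 * (t : ℂ) := by
    have : 2 * dot2 α β + 3 * (2 * (t : ℂ)) = 0 := by rw [← hA]; exact hab
    linear_combination this / 2
  have hR : dot2 β β = 6 * (t : ℂ) := by rw [hbb, hA]; ring
  -- expand bilinearity
  simp only [dot2, Pi.add_apply, Pi.smul_apply, smul_eq_mul] at h1 h2 ⊢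
  simp only [dot2] at hA hQ hR
  -- rewrite equations in terms of a, b, t
  have e1 : a * (2 * (t : ℂ)) + b * (-3 * (t : ℂ)) = (t : ℂ) - 1 := by
    linear_combination -h1 + (1/2 - a) * hA - b * hQ
  have e2 : a * (-3 * (t : ℂ)) + b * (6 * (t : ℂ)) = 3 * (t : ℂ) - 1 := by
    linear_combination -h2 + (1/2 - b) * hR - a * hQ
  have ha : a = 5 - 3 / (t : ℂ) := by
    field_simp
    linear_combination 2 * e1 + e2
  have hb : b = 3 - 5 / (3 * (t : ℂ)) := by
    field_simp
    linear_combination 3 * e1 + 2 * e2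
  have hxx : (a * α 0 + b * β 0) * (a * α 0 + b * β 0)
      + (a * α 1 + b * β 1) * (a * α 1 + b * β 1)
      = a ^ 2 * (2 * (t : ℂ)) + 2 * a * b * (-3 * (t : ℂ)) + b ^ 2 * (6 * (t : ℂ)) := by
    linear_combination a ^ 2 * hA + 2 * a * b * hQ + b ^ 2 * hR
  rw [hxx]
  have hu : a * (t : ℂ) - 5 * (t : ℂ) + 3 = (2 : ℂ) * (a * (2 * (t : ℂ)) + b * (-3 * (t : ℂ))) + (a * (-3 * (t : ℂ)) + b * (6 * (t : ℂ))) - (2 * ((t:ℂ) - 1) + (3 * (t:ℂ) - 1)) := by ring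
  field_simp
  linear_combination ((24 : ℂ) - 24 * (t:ℂ) - 24 * (a * (t:ℂ) - 5 * (t:ℂ) + 3)
      + 24 * (3 * b * (t:ℂ) - 9 * (t:ℂ) + 5)) * (2 * e1 + e2)
    + ((8 : ℂ) - 24 * (t:ℂ) - 8 * (3 * b * (t:ℂ) - 9 * (t:ℂ) + 5)) * (3 * e1 + 2 * e2)
end
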